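/- Let a timestamped log over [t0, t_cur] starting from a well-formed graph SG_{t0} with a finite node set be given. Then for all t_k ≤ t_l in [t0, t_cur], the change in the number of nodes satisfies (as integers): |V(SG_{t_l})| − |V(SG_{t_k})| = (number of logged addNode operations with timestamp in (t_k, t_l]) − (number of logged remNode operations with timestamp in (t_k, t_l]). -/

import Mathlib

/-- A graph over a node type `α`: a set of nodes and a set of edges
(unordered pairs of nodes). -/
structure LogGraph (α : Type*) where
  V : Set α
  E : Set (Sym2 α)

/-- A graph is well-formed if its edges are pairs of *distinct* nodes and
both endpoints of every edge belong to the node set. -/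
def LogGraph.WellFormed {α : Type*} (G : LogGraph α) : Prop :=
  (∀ e ∈ G.E, ¬ e.IsDiag) ∧ ∀ e ∈ G.E, ∀ v ∈ e, v ∈ G.V

/-- Update operations on graphs. -/
inductive Op (α : Type*) where
  | addNode (v : α)
  | remNode (v : α)
  | addEdge (e : Sym2 α)
  | remEdge (e : Sym2 α)

/-- The action of a single operation on a graph: `addNode v` adds the node `v`;
`remNode v` removes `v` and all edges incident to it; `addEdge e` adds the edge `e`;
`remEdge e` removes the edge `e`. -/
def applyOp {α : Type*} (G : LogGraph α) : Op α → LogGraph α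
  | Op.addNode v => ⟨G.V ∪ {v}, G.E⟩
  | Op.remNode v => ⟨G.V \ {v}, {e ∈ G.E | v ∉ e}⟩
  | Op.addEdge e => ⟨G.V, G.E ∪ {e}⟩
  | Op.remEdge e => ⟨G.V, G.E \ {e}⟩

/-- Applying a sequence of operations to a graph, from left to right. -/
def applySeq {α : Type*} (G : LogGraph α) (l : List (Op α)) : LogGraph α :=
  l.foldl applyOp G

/-- Validity of an operation at a graph. -/
def validAt {α : Type*} (G : LogGraph α) : Op α → Prop
  | Op.addNode v => v ∉ G.V
  | Op.remNode v => v ∈ G.V ∧ ∀ e ∈ G.E, v ∉ e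
  | Op.addEdge e => ¬ e.IsDiag ∧ (∀ v ∈ e, v ∈ G.V) ∧ e ∉ G.E
  | Op.remEdge e => e ∈ G.E

/-- The inverse of an operation. -/
def Op.inv {α : Type*} : Op α → Op α
  | Op.addNode v => Op.remNode v
  | Op.remNode v => Op.addNode v
  | Op.addEdge e => Op.remEdge e
  | Op.remEdge e => Op.addEdge e

/-- Validity of a sequence of operations at a graph: each operation is valid at the
graph obtained by applying the preceding operations. -/
def validSeq {α : Type*} : LogGraph α → List (Op α) → Prop
  | _, [] => True
  | G, op :: rest => validAt G op ∧ validSeq (applyOp G op) rest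
/-- The snapshot at time `t` determined by an initial graph `SG0` and a timestamped
log `L`: the result of applying to `SG0` the logged operations with timestamp `≤ t`. -/
def snapshot {α τ : Type*} [LinearOrder τ] (SG0 : LogGraph α) (L : List (Op α × τ))
    (t : τ) : LogGraph α :=
  applySeq SG0 ((L.filter fun p => decide (p.2 ≤ t)).map Prod.fst)

/-- `op` is an `addNode` operation. -/
def isAddNode {α : Type*} : Op α → Bool
  | Op.addNode _ => true
  | _ => false

/-- `op` is a `remNode` operation. -/
def isRemNode {α : Type*} : Op α → Bool
  | Op.remNode _ => true
  | _ => false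

/-!
A valid `addNode` inserts a node that is not yet present and a valid `remNode` deletes one
that is, while edge operations leave the node set alone; so along a valid sequence the number
of nodes changes by (#addNode) − (#remNode). Since timestamps are nondecreasing, the
operations with timestamp `≤ t` form a prefix of the log. Hence the snapshot at `tl` is the
snapshot at `tk` followed by the operations with timestamp in `(tk, tl]`, and validity of the
whole log makes this block valid at the snapshot at `tk`.
-/

theorem List.filter_eq_filter_append_filter {β : Type*} {P Q : β → Bool} {L : List β}
    (hQP : ∀ a, Q a → P a) (hL : L.Pairwise fun a b => Q b → Q a) :
    L.filter P = L.filter Q ++ L.filter (fun a => P a && !Q a) := by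
  induction L with
  | nil => rfl
  | cons a rest ih =>
    have ih := ih hL.of_cons
    by_cases ha : Q a
    · simp [ha, hQP a ha, ih]
    · have hrest : rest.filter Q = [] := List.filter_eq_nil_iff.2 fun b hb hQb =>
        ha (List.rel_of_pairwise_cons hL hb hQb)
      simp [List.filter_cons, ha, ih, hrest]

section Graph

variable {α : Type*}

theorem applySeq_append (G : LogGraph α) (l₁ l₂ : List (Op α)) :
    applySeq G (l₁ ++ l₂) = applySeq (applySeq G l₁) l₂ :=
  List.foldl_append ..

theorem validSeq_append (G : LogGraph α) (l₁ l₂ : List (Op α)) :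
    validSeq G (l₁ ++ l₂) ↔ validSeq G l₁ ∧ validSeq (applySeq G l₁) l₂ := by
  induction l₁ generalizing G with
  | nil => simp [validSeq, applySeq]
  | cons op rest ih => simp only [List.cons_append, validSeq, ih, and_assoc]; rfl

theorem finite_applyOp_V {G : LogGraph α} (hG : G.V.Finite) (op : Op α) :
    (applyOp G op).V.Finite := by
  cases op with
  | addNode v => exact hG.union (Set.finite_singleton v)
  | remNode v => exact hG.sdiff
  | addEdge _ | remEdge _ => exact hG

theorem finite_applySeq_V {G : LogGraph α} (hG : G.V.Finite) (l : List (Op α)) :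
    (applySeq G l).V.Finite := by
  induction l generalizing G with
  | nil => exact hG
  | cons op rest ih => exact ih (finite_applyOp_V hG op)

theorem ncard_applyOp_V {G : LogGraph α} (hG : G.V.Finite) {op : Op α} (hop : validAt G op) :
    ((applyOp G op).V.ncard : ℤ) =
      G.V.ncard + (if isAddNode op then 1 else 0) - (if isRemNode op then 1 else 0) := by
  cases op with
  | addNode v =>
    simp [applyOp, isAddNode, isRemNode, Set.union_singleton, Set.ncard_insert_of_notMem hop hG]
  | remNode v =>
    have hpos : 1 ≤ G.V.ncard := (Set.ncard_pos hG).2 ⟨v, hop.1⟩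
    simp [applyOp, isAddNode, isRemNode, Set.ncard_sdiff_singleton_of_mem hop.1,
      Nat.cast_sub hpos]
  | addEdge _ | remEdge _ => simp [applyOp, isAddNode, isRemNode]

theorem ncard_applySeq_V {G : LogGraph α} (hG : G.V.Finite) {l : List (Op α)}
    (hl : validSeq G l) :
    ((applySeq G l).V.ncard : ℤ) = G.V.ncard + l.countP isAddNode - l.countP isRemNode := by
  induction l generalizing G with
  | nil => simp [applySeq]
  | cons op rest ih =>
    obtain ⟨hop, hrest⟩ := hl
    rw [show applySeq G (op :: rest) = applySeq (applyOp G op) rest from rfl,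
      ih (finite_applyOp_V hG op) hrest, ncard_applyOp_V hG hop, List.countP_cons,
      List.countP_cons]
    push_cast
    ring

end Graph

section Snapshot

variable {α τ : Type*} [LinearOrder τ] {L : List (Op α × τ)}

theorem pairwise_decide_le_imp (hL : L.Pairwise fun p q => p.2 ≤ q.2) (t : τ) :
    L.Pairwise fun p q => decide (q.2 ≤ t) → decide (p.2 ≤ t) :=
  hL.imp fun hpq hq => decide_eq_true (hpq.trans (of_decide_eq_true hq))

theorem filter_le_eq_filter_le_append_filter_Ioc (hL : L.Pairwise fun p q => p.2 ≤ q.2)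
    {s t : τ} (hst : s ≤ t) :
    L.filter (fun p => decide (p.2 ≤ t)) =
      L.filter (fun p => decide (p.2 ≤ s)) ++
        L.filter (fun p => decide (s < p.2 ∧ p.2 ≤ t)) := by
  rw [List.filter_eq_filter_append_filter (fun p hp => decide_eq_true
    ((of_decide_eq_true hp).trans hst)) (pairwise_decide_le_imp hL s)]
  congr 1
  exact List.filter_congr fun p _ => by rw [Bool.eq_iff_iff]; simp [and_comm]

theorem snapshot_eq_applySeq_snapshot (SG0 : LogGraph α)
    (hL : L.Pairwise fun p q => p.2 ≤ q.2) {s t : τ} (hst : s ≤ t) :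
    snapshot SG0 L t = applySeq (snapshot SG0 L s)
      ((L.filter fun p => decide (s < p.2 ∧ p.2 ≤ t)).map Prod.fst) := by
  rw [snapshot, filter_le_eq_filter_le_append_filter_Ioc hL hst, List.map_append, applySeq_append]
  rfl

theorem validSeq_snapshot_Ioc {SG0 : LogGraph α} (hL : L.Pairwise fun p q => p.2 ≤ q.2)
    (hval : validSeq SG0 (L.map Prod.fst)) {s t : τ} (hst : s ≤ t) :
    validSeq (snapshot SG0 L s)
      ((L.filter fun p => decide (s < p.2 ∧ p.2 ≤ t)).map Prod.fst) := by
  have hprefix :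
      L = L.filter (fun p => decide (p.2 ≤ t)) ++ L.filter (fun p => !decide (p.2 ≤ t)) := by
    simpa using List.filter_eq_filter_append_filter (P := fun _ => true) (fun _ _ => rfl)
      (pairwise_decide_le_imp hL t)
  rw [hprefix, List.map_append, validSeq_append, filter_le_eq_filter_le_append_filter_Ioc hL hst,
    List.map_append, validSeq_append] at hval
  exact hval.1.2

end Snapshot

theorem node_count_differential_general {α τ : Type*} [LinearOrder τ]
    (SG0 : LogGraph α) (L : List (Op α × τ))
    (hfin : SG0.V.Finite)
    (hmono : L.Pairwise fun p q => p.2 ≤ q.2)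
    (hval : validSeq SG0 (L.map Prod.fst))
    (tk tl : τ) (hkl : tk ≤ tl) :
    ((snapshot SG0 L tl).V.ncard : ℤ) - ((snapshot SG0 L tk).V.ncard : ℤ) =
      (L.countP fun p => decide (tk < p.2 ∧ p.2 ≤ tl) && isAddNode p.1 : ℤ) -
      (L.countP fun p => decide (tk < p.2 ∧ p.2 ≤ tl) && isRemNode p.1 : ℤ) := by
  rw [snapshot_eq_applySeq_snapshot SG0 hmono hkl,
    ncard_applySeq_V (G := snapshot SG0 L tk) (finite_applySeq_V hfin _)
      (validSeq_snapshot_Ioc hmono hval hkl),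
    List.countP_map, List.countP_map, List.countP_filter, List.countP_filter]
  simp only [Function.comp_def, Bool.and_comm]
  ring

/-- The change in the number of nodes between times `t_k ≤ t_l` equals the number of
logged `addNode` operations with timestamp in `(t_k, t_l]` minus the number of logged
`remNode` operations with timestamp in `(t_k, t_l]`. -/
theorem node_count_differential {α τ : Type*} [LinearOrder τ]
    (t0 tcur : τ) (SG0 : LogGraph α) (L : List (Op α × τ))
    (hwf : SG0.WellFormed) (hfin : SG0.V.Finite)
    (hts : ∀ p ∈ L, t0 ≤ p.2 ∧ p.2 ≤ tcur)
    (hmono : L.Pairwise fun p q => p.2 ≤ q.2)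
    (hval : validSeq SG0 (L.map Prod.fst))
    (tk tl : τ) (h0k : t0 ≤ tk) (hkl : tk ≤ tl) (hlc : tl ≤ tcur) :
    ((snapshot SG0 L tl).V.ncard : ℤ) - ((snapshot SG0 L tk).V.ncard : ℤ) =
      (L.countP fun p => decide (tk < p.2 ∧ p.2 ≤ tl) && isAddNode p.1 : ℤ) -
      (L.countP fun p => decide (tk < p.2 ∧ p.2 ≤ tl) && isRemNode p.1 : ℤ) :=
  node_count_differential_general SG0 L hfin hmono hval tk tl hkl
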